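/- arXiv:2405.01424 — 3 statements merged into one kernel-verified Lean document; each statement's English description precedes it below -/
import Mathlib

section
/- For C ∈ ℝ^n and j ∈ {1, …, n}, define k_j(C) = min{γ_{j(j+1)}(C), x_j + √(max(C_j,0))} − max{γ_{(j−1)j}(C), x_j − √(max(C_j,0))}, with the conventions γ_{01}(C) = −∞ and γ_{n(n+1)}(C) = +∞. Then: (i) C ∈ 𝔾 if and only if k_j(C) > 0 for all j; (ii) if C ∈ 𝔾, then the length of the interval E_j^{(C)} equals k_j(C); and (iii) 𝔾 is a convex subset of ℝ^n. -/
open MeasureTheory Set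
open scoped Classical

/-- `f_j^{(C)}(t) = C_j - (t - x_j)^2`. -/
noncomputable def fj (n : ℕ) (x C : Fin n → ℝ) (j : Fin n) (t : ℝ) : ℝ :=
  C j - (t - x j) ^ 2

/-- `f^{(C)}(t) = max{f_1^{(C)}(t), …, f_n^{(C)}(t), 0}`. -/
noncomputable def fmax (n : ℕ) (x C : Fin n → ℝ) (t : ℝ) : ℝ :=
  max (⨆ j : Fin n, fj n x C j t) 0

/-- `E_j^{(C)} = {t : f_j^{(C)}(t) = f^{(C)}(t)}`. -/
def Ej (n : ℕ) (x C : Fin n → ℝ) (j : Fin n) : Set ℝ :=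
  {t | fj n x C j t = fmax n x C t}

/-- `F_j(C) = ∫_{E_j^{(C)}} f^{(C)}` if `E_j^{(C)} ≠ ∅`, else `0`. -/
noncomputable def Fj (n : ℕ) (x C : Fin n → ℝ) (j : Fin n) : ℝ :=
  if (Ej n x C j).Nonempty then ∫ t in Ej n x C j, fmax n x C t else 0

/-- `F(C) = (F_1(C), …, F_n(C))`. -/
noncomputable def Fvec (n : ℕ) (x C : Fin n → ℝ) : Fin n → ℝ :=
  fun j => Fj n x C j

/-- `𝔾 = {C : F_j(C) > 0 for all j}`. -/
def Gset (n : ℕ) (x : Fin n → ℝ) : Set (Fin n → ℝ) :=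
  {C | ∀ j, 0 < Fj n x C j}

/-- `γ_{ij}(C) = (C_i - C_j)/(2(x_j - x_i)) + (x_i + x_j)/2`. -/
noncomputable def gam (n : ℕ) (x C : Fin n → ℝ) (i j : Fin n) : ℝ :=
  (C i - C j) / (2 * (x j - x i)) + (x i + x j) / 2

/-- `k_j(C) = min{γ_{j(j+1)}, x_j + √(C_j)_+} - max{γ_{(j-1)j}, x_j - √(C_j)_+}`,
with the conventions `γ_{01} = -∞`, `γ_{n(n+1)} = +∞` (the corresponding term is
dropped from the min/max). -/
noncomputable def kfun (n : ℕ) (x C : Fin n → ℝ) (j : Fin n) : ℝ :=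
  (if h : j.val + 1 < n then
      min (gam n x C j ⟨j.val + 1, h⟩) (x j + Real.sqrt (max (C j) 0))
    else x j + Real.sqrt (max (C j) 0)) -
  (if _ : 0 < j.val then
      max (gam n x C ⟨j.val - 1, lt_of_le_of_lt (Nat.sub_le _ _) j.isLt⟩ j)
        (x j - Real.sqrt (max (C j) 0))
    else x j - Real.sqrt (max (C j) 0))

/-!
Consecutive parabolas `f_i, f_{i+1}` cross exactly once, at `γ_{i(i+1)}`, and `f_i ≥ f_{i+1}`
to the left of it. Hence `E_j` always lies in `[leftEnd j, rightEnd j]`, whose length is `k_j`.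
When every `k_j` is positive, `rightEnd i ≤ γ_{i(i+1)} ≤ leftEnd (i+1)` makes both endpoint
sequences increasing, so at any `t` in the `j`-th interval the values `f_i(t)` increase up to
`i = j` and decrease afterwards: the interval is exactly `E_j`, and `f_j > 0` on its interior
gives `F_j > 0`. Convexity of `𝔾` follows because `leftEnd` is convex and `rightEnd` concave in
`C` on `C_j ≥ 0` (`γ` is affine in `C` and `√` is concave).
-/

theorem Fin.orderSucc_eq_mk {n : ℕ} (i : Fin n) (h : i.val + 1 < n) :
    Order.succ i = ⟨i.val + 1, h⟩ :=
  CovBy.succ_eq (Fin.covBy_iff.2 (Order.covBy_add_one _))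

theorem Fin.val_add_one_lt_of_not_isMax {n : ℕ} {i : Fin n} (h : ¬IsMax i) : i.val + 1 < n := by
  obtain ⟨b, hb⟩ := not_isMax_iff.1 h
  have := b.isLt
  rw [Fin.lt_def] at hb
  omega

section Parabolas

variable {n : ℕ} {x C : Fin n → ℝ} {i j : Fin n} {t : ℝ}

theorem fj_sub_fj (hij : x i ≠ x j) (t : ℝ) :
    fj n x C i t - fj n x C j t = 2 * (x i - x j) * (t - gam n x C i j) := by
  have : x j - x i ≠ 0 := sub_ne_zero.2 hij.symm
  unfold fj gam
  field_simp
  ring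

theorem fj_le_fj_iff_gam_le (hij : x i < x j) :
    fj n x C i t ≤ fj n x C j t ↔ gam n x C i j ≤ t := by
  have := fj_sub_fj (C := C) hij.ne t
  constructor <;> intro h <;> nlinarith

theorem fj_le_fj_iff_le_gam (hij : x i < x j) :
    fj n x C j t ≤ fj n x C i t ↔ t ≤ gam n x C i j := by
  have := fj_sub_fj (C := C) hij.ne t
  constructor <;> intro h <;> nlinarith

theorem fj_pos_iff : 0 < fj n x C j t ↔ |t - x j| < √(max (C j) 0) := by
  rw [Real.lt_sqrt (abs_nonneg _), sq_abs, lt_max_iff, fj, sub_pos]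
  exact ⟨Or.inl, fun h => h.resolve_right (sq_nonneg _).not_gt⟩

theorem fj_nonneg_iff (hC : 0 ≤ C j) : 0 ≤ fj n x C j t ↔ |t - x j| ≤ √(max (C j) 0) := by
  rw [Real.le_sqrt (abs_nonneg _) (le_max_right _ _), sq_abs, max_eq_left hC, fj, sub_nonneg]

theorem mem_Ej_iff :
    t ∈ Ej n x C j ↔ 0 ≤ fj n x C j t ∧ ∀ i, fj n x C i t ≤ fj n x C j t := by
  have : Nonempty (Fin n) := ⟨j⟩
  have hbdd : BddAbove (range fun i => fj n x C i t) := (finite_range _).bddAbove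
  refine ⟨fun h => ⟨h ▸ le_max_right _ _, fun i =>
      h ▸ (le_ciSup hbdd i).trans (le_max_left _ _)⟩,
    fun ⟨h0, hmax⟩ => ?_⟩
  exact le_antisymm ((le_ciSup hbdd j).trans (le_max_left _ _)) (max_le (ciSup_le hmax) h0)

end Parabolas

noncomputable def leftEnd (n : ℕ) (x C : Fin n → ℝ) (j : Fin n) : ℝ :=
  if _ : 0 < j.val then max (gam n x C ⟨j.val - 1, by omega⟩ j) (x j - √(max (C j) 0))
  else x j - √(max (C j) 0)

noncomputable def rightEnd (n : ℕ) (x C : Fin n → ℝ) (j : Fin n) : ℝ :=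
  if h : j.val + 1 < n then min (gam n x C j ⟨j.val + 1, h⟩) (x j + √(max (C j) 0))
  else x j + √(max (C j) 0)

section Endpoints

variable {n : ℕ} {x C : Fin n → ℝ} {j : Fin n} {t : ℝ}

theorem kfun_eq_rightEnd_sub_leftEnd : kfun n x C j = rightEnd n x C j - leftEnd n x C j := rfl

theorem leftEnd_le_iff :
    leftEnd n x C j ≤ t ↔ x j - √(max (C j) 0) ≤ t ∧
      ∀ h : 0 < j.val, gam n x C ⟨j.val - 1, by omega⟩ j ≤ t := by
  unfold leftEnd
  split_ifs with h <;> simp [h, and_comm]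

theorem le_rightEnd_iff :
    t ≤ rightEnd n x C j ↔ t ≤ x j + √(max (C j) 0) ∧
      ∀ h : j.val + 1 < n, t ≤ gam n x C j ⟨j.val + 1, h⟩ := by
  unfold rightEnd
  split_ifs with h
  · simpa [h] using and_comm
  · simp [h]

theorem leftEnd_lt_rightEnd (hk : 0 < kfun n x C j) : leftEnd n x C j < rightEnd n x C j :=
  sub_pos.1 hk

theorem sub_sqrt_le_leftEnd : x j - √(max (C j) 0) ≤ leftEnd n x C j :=
  (leftEnd_le_iff.1 le_rfl).1

theorem rightEnd_le_add_sqrt : rightEnd n x C j ≤ x j + √(max (C j) 0) :=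
  (le_rightEnd_iff.1 le_rfl).1

theorem gam_le_leftEnd_succ (i : Fin n) (h : i.val + 1 < n) :
    gam n x C i ⟨i.val + 1, h⟩ ≤ leftEnd n x C ⟨i.val + 1, h⟩ := by
  simpa using (leftEnd_le_iff (j := ⟨i.val + 1, h⟩).1 le_rfl).2 i.val.succ_pos

theorem rightEnd_le_gam_succ (i : Fin n) (h : i.val + 1 < n) :
    rightEnd n x C i ≤ gam n x C i ⟨i.val + 1, h⟩ :=
  (le_rightEnd_iff.1 le_rfl).2 h

theorem pos_of_kfun_pos (hk : 0 < kfun n x C j) : 0 < C j := by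
  have := (sub_sqrt_le_leftEnd (C := C) (j := j)).trans_lt
    ((leftEnd_lt_rightEnd hk).trans_le rightEnd_le_add_sqrt)
  have : 0 < max (C j) 0 := Real.sqrt_pos.1 (by linarith)
  simpa using this

end Endpoints

section Ej

variable {n : ℕ} {x C : Fin n → ℝ}

theorem Ej_subset_Icc (hx : StrictMono x) (j : Fin n) :
    Ej n x C j ⊆ Icc (leftEnd n x C j) (rightEnd n x C j) := by
  intro t ht
  obtain ⟨h0, hmax⟩ := mem_Ej_iff.1 ht
  have hC : 0 ≤ C j := (sq_nonneg _).trans (sub_nonneg.1 h0)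
  obtain ⟨hl, hr⟩ := abs_le.1 ((fj_nonneg_iff hC).1 h0)
  refine ⟨leftEnd_le_iff.2 ⟨by linarith, fun h => ?_⟩,
    le_rightEnd_iff.2 ⟨by linarith, fun h => ?_⟩⟩
  · exact (fj_le_fj_iff_gam_le (hx (Fin.lt_def.2 (by simp; omega)))).1 (hmax _)
  · exact (fj_le_fj_iff_le_gam (hx (Fin.lt_def.2 (by simp)))).1 (hmax _)

section AllPos

variable (hk : ∀ j, 0 < kfun n x C j)
include hk

theorem leftEnd_monotone : Monotone (leftEnd n x C) :=
  monotone_of_le_succ fun i hi => by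
    have h := Fin.val_add_one_lt_of_not_isMax hi
    rw [Fin.orderSucc_eq_mk i h]
    linarith [leftEnd_lt_rightEnd (hk i), rightEnd_le_gam_succ (x := x) (C := C) i h,
      gam_le_leftEnd_succ (x := x) (C := C) i h]

theorem rightEnd_monotone : Monotone (rightEnd n x C) :=
  monotone_of_le_succ fun i hi => by
    have h := Fin.val_add_one_lt_of_not_isMax hi
    rw [Fin.orderSucc_eq_mk i h]
    linarith [leftEnd_lt_rightEnd (hk ⟨i.val + 1, h⟩),
      rightEnd_le_gam_succ (x := x) (C := C) i h, gam_le_leftEnd_succ (x := x) (C := C) i h]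

theorem fj_le_fj_of_mem_Icc (hx : StrictMono x) {j : Fin n} {t : ℝ}
    (ht : t ∈ Icc (leftEnd n x C j) (rightEnd n x C j)) (i : Fin n) :
    fj n x C i t ≤ fj n x C j t := by
  rcases le_total i j with hij | hji
  · have hmono : MonotoneOn (fun i => fj n x C i t) (Iic j) :=
      monotoneOn_of_le_succ ordConnected_Iic fun a ha _ hsa => by
        have h := Fin.val_add_one_lt_of_not_isMax ha
        rw [Fin.orderSucc_eq_mk a h] at hsa ⊢
        refine (fj_le_fj_iff_gam_le (hx (Fin.lt_def.2 (by simp)))).2 ?_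
        exact (gam_le_leftEnd_succ a h).trans ((leftEnd_monotone hk hsa).trans ht.1)
    exact hmono hij self_mem_Iic hij
  · have hanti : AntitoneOn (fun i => fj n x C i t) (Ici j) :=
      antitoneOn_of_succ_le ordConnected_Ici fun a ha hja _ => by
        have h := Fin.val_add_one_lt_of_not_isMax ha
        rw [Fin.orderSucc_eq_mk a h]
        refine (fj_le_fj_iff_le_gam (hx (Fin.lt_def.2 (by simp)))).2 ?_
        exact ht.2.trans ((rightEnd_monotone hk hja).trans (rightEnd_le_gam_succ a h))
    exact hanti self_mem_Ici hji hji

theorem Ej_eq_Icc (hx : StrictMono x) (j : Fin n) :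
    Ej n x C j = Icc (leftEnd n x C j) (rightEnd n x C j) := by
  refine (Ej_subset_Icc hx j).antisymm fun t ht =>
    mem_Ej_iff.2 ⟨?_, fj_le_fj_of_mem_Icc hk hx ht⟩
  refine (fj_nonneg_iff (pos_of_kfun_pos (hk j)).le).2 (abs_le.2 ⟨?_, ?_⟩)
  · linarith [ht.1, sub_sqrt_le_leftEnd (x := x) (C := C) (j := j)]
  · linarith [ht.2, rightEnd_le_add_sqrt (x := x) (C := C) (j := j)]

end AllPos

end Ej

section Fj

variable {n : ℕ} {x C : Fin n → ℝ}

theorem Fj_pos (hx : StrictMono x) (hk : ∀ j, 0 < kfun n x C j) (j : Fin n) :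
    0 < Fj n x C j := by
  have hE := Ej_eq_Icc hk hx j
  have hlt := leftEnd_lt_rightEnd (hk j)
  have hfmax : EqOn (fmax n x C) (fj n x C j) (Icc (leftEnd n x C j) (rightEnd n x C j)) :=
    fun t ht => (hE ▸ ht : t ∈ Ej n x C j).symm
  rw [Fj, if_pos (hE ▸ nonempty_Icc.2 hlt.le), hE, setIntegral_congr_fun measurableSet_Icc hfmax,
    integral_Icc_eq_integral_Ioc, ← intervalIntegral.integral_of_le hlt.le]
  refine intervalIntegral.intervalIntegral_pos_of_pos_on
    (Continuous.intervalIntegrable (by unfold fj; fun_prop) _ _) (fun t ht => ?_) hlt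
  refine fj_pos_iff.2 (abs_lt.2 ⟨?_, ?_⟩)
  · linarith [ht.1, sub_sqrt_le_leftEnd (x := x) (C := C) (j := j)]
  · linarith [ht.2, rightEnd_le_add_sqrt (x := x) (C := C) (j := j)]

theorem kfun_pos_of_Fj_pos (hx : StrictMono x) {j : Fin n} (hF : 0 < Fj n x C j) :
    0 < kfun n x C j := by
  by_contra! hk
  have hnull : volume (Ej n x C j) = 0 := measure_mono_null (Ej_subset_Icc hx j) (by
    rw [Real.volume_Icc, ENNReal.ofReal_eq_zero, ← kfun_eq_rightEnd_sub_leftEnd]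
    exact hk)
  have : Fj n x C j = 0 := by simp [Fj, Measure.restrict_eq_zero.2 hnull]
  exact hF.ne' this

theorem mem_Gset_iff (hx : StrictMono x) : C ∈ Gset n x ↔ ∀ j, 0 < kfun n x C j :=
  ⟨fun hC j => kfun_pos_of_Fj_pos hx (hC j), Fj_pos hx⟩

end Fj

section Convexity

variable {n : ℕ} {x : Fin n → ℝ}

theorem gam_convexCombo {C D : Fin n → ℝ} {a b : ℝ} (hab : a + b = 1) (i j : Fin n) :
    gam n x (a • C + b • D) i j = a * gam n x C i j + b * gam n x D i j := by
  simp only [gam, Pi.add_apply, Pi.smul_apply, smul_eq_mul]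
  linear_combination (-(x i + x j) / 2) * hab

theorem convex_coord_nonneg (j : Fin n) : Convex ℝ {C : Fin n → ℝ | 0 ≤ C j} :=
  convex_halfSpace_ge (LinearMap.proj (R := ℝ) j).isLinear 0

theorem sqrt_convexCombo_le {C D : Fin n → ℝ} {a b : ℝ} {j : Fin n} (hC : 0 ≤ C j)
    (hD : 0 ≤ D j) (ha : 0 ≤ a) (hb : 0 ≤ b) (hab : a + b = 1) :
    a * √(max (C j) 0) + b * √(max (D j) 0) ≤ √(max ((a • C + b • D) j) 0) := by
  have hE : 0 ≤ (a • C + b • D) j := convex_coord_nonneg j hC hD ha hb hab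
  rw [max_eq_left hC, max_eq_left hD, max_eq_left hE]
  exact Real.strictConcaveOn_sqrt.concaveOn.2 hC hD ha hb hab

theorem leftEnd_convexOn (j : Fin n) :
    ConvexOn ℝ {C | 0 ≤ C j} (fun C => leftEnd n x C j) := by
  refine ⟨convex_coord_nonneg j, fun C hC D hD a b ha hb hab => ?_⟩
  simp only [smul_eq_mul]
  refine leftEnd_le_iff.2 ⟨?_, fun h => ?_⟩
  · have := sqrt_convexCombo_le hC hD ha hb hab
    have hxj : a * x j + b * x j = x j := by rw [← add_mul, hab, one_mul]
    linarith [mul_le_mul_of_nonneg_left (sub_sqrt_le_leftEnd (x := x) (C := C) (j := j)) ha,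
      mul_le_mul_of_nonneg_left (sub_sqrt_le_leftEnd (x := x) (C := D) (j := j)) hb]
  · rw [gam_convexCombo hab]
    gcongr <;> exact (leftEnd_le_iff.1 le_rfl).2 h

theorem rightEnd_concaveOn (j : Fin n) :
    ConcaveOn ℝ {C | 0 ≤ C j} (fun C => rightEnd n x C j) := by
  refine ⟨convex_coord_nonneg j, fun C hC D hD a b ha hb hab => ?_⟩
  simp only [smul_eq_mul]
  refine le_rightEnd_iff.2 ⟨?_, fun h => ?_⟩
  · have := sqrt_convexCombo_le hC hD ha hb hab
    have hxj : a * x j + b * x j = x j := by rw [← add_mul, hab, one_mul]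
    linarith [mul_le_mul_of_nonneg_left (rightEnd_le_add_sqrt (x := x) (C := C) (j := j)) ha,
      mul_le_mul_of_nonneg_left (rightEnd_le_add_sqrt (x := x) (C := D) (j := j)) hb]
  · rw [gam_convexCombo hab]
    gcongr <;> exact (le_rightEnd_iff.1 le_rfl).2 h

theorem convex_Gset (hx : StrictMono x) : Convex ℝ (Gset n x) := by
  have hG : Gset n x = ⋂ j, {C | C ∈ {C | 0 ≤ C j} ∧ 0 < kfun n x C j} := by
    ext C
    simp only [mem_Gset_iff hx, mem_iInter, mem_ofPred_eq]
    exact forall_congr' fun j => ⟨fun hk => ⟨(pos_of_kfun_pos hk).le, hk⟩, And.right⟩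
  rw [hG]
  exact convex_iInter fun j => ((rightEnd_concaveOn j).sub (leftEnd_convexOn j)).convex_gt 0

end Convexity

theorem stmt_9_general (n : ℕ) (x : Fin n → ℝ) (hx : StrictMono x) :
    (∀ C : Fin n → ℝ, C ∈ Gset n x ↔ ∀ j, 0 < kfun n x C j) ∧
    (∀ C ∈ Gset n x, ∀ j : Fin n,
      ∃ α β : ℝ, Ej n x C j = Set.Icc α β ∧ β - α = kfun n x C j) ∧
    Convex ℝ (Gset n x) :=
  ⟨fun _ => mem_Gset_iff hx,
    fun _ hC j => ⟨_, _, Ej_eq_Icc ((mem_Gset_iff hx).1 hC) hx j, rfl⟩,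
    convex_Gset hx⟩

/-- (i) `C ∈ 𝔾` iff `k_j(C) > 0` for all `j`; (ii) for `C ∈ 𝔾` the length of
`E_j^{(C)}` is `k_j(C)`; (iii) `𝔾` is convex. -/
theorem stmt_9 (n : ℕ) (hn : 1 ≤ n) (x : Fin n → ℝ) (hx : StrictMono x) :
    (∀ C : Fin n → ℝ, C ∈ Gset n x ↔ ∀ j, 0 < kfun n x C j) ∧
    (∀ C ∈ Gset n x, ∀ j : Fin n,
      ∃ α β : ℝ, Ej n x C j = Set.Icc α β ∧ β - α = kfun n x C j) ∧
    Convex ℝ (Gset n x) :=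
  stmt_9_general n x hx
end

section
/- The map F is coercive on the nonnegative orthant: there exist constants δ ∈ (0,1) and M > 0 such that for every C ∈ ℝ^n with C_j ≥ 0 for all j and with Euclidean norm ‖C‖ ≥ M√n, one has F(C) · C ≥ (δ/√n)‖C‖^2. In particular, F(C) · C / ‖C‖ → ∞ as ‖C‖ → ∞ with C ranging over the nonnegative orthant. -/
open MeasureTheory Set
open scoped Classical

/-!
Let `2 d` be the minimal spacing of the nodes and `C j` a largest coefficient. On the ball of
radius `d` around `x j` the node `x j` is the nearest one and `C j` the largest, so there
`f = f_j ≥ C j - d²`; once `C j ≥ 2 d²` this gives `F_j(C) ≥ 2 d (C j - d²) ≥ d C j`. All other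
terms of `F(C)·C` are nonnegative and `‖C‖ ≤ √n C j`, hence `F(C)·C ≥ d C j² ≥ (d / n) ‖C‖²`.
-/

open Metric Filter Topology

theorem Function.Injective.exists_pos_forall_le_dist {ι X : Type*} [Finite ι] [MetricSpace X]
    {x : ι → X} (hx : Function.Injective x) :
    ∃ d > 0, ∀ i j, i ≠ j → d ≤ dist (x i) (x j) := by
  have : ∀ᶠ d in 𝓝[>] (0 : ℝ), ∀ i j, i ≠ j → d ≤ dist (x i) (x j) := by
    refine eventually_all.2 fun i ↦ eventually_all.2 fun j ↦ ?_
    by_cases hij : i = j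
    · exact .of_forall fun _ h ↦ absurd hij h
    · filter_upwards [nhdsWithin_le_nhds (eventually_le_nhds (dist_pos.2 (hx.ne hij)))]
        with d hd _ using hd
  obtain ⟨d, hd, hpos⟩ := (this.and self_mem_nhdsWithin).exists
  exact ⟨d, hpos, hd⟩

theorem sqrt_sum_sq_le_sqrt_card_mul {n : ℕ} {C : Fin n → ℝ} {j : Fin n} (hC : ∀ i, 0 ≤ C i)
    (hmax : ∀ i, C i ≤ C j) : Real.sqrt (∑ i, C i ^ 2) ≤ Real.sqrt n * C j := by
  have hsum : ∑ i, C i ^ 2 ≤ n * C j ^ 2 := by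
    simpa using Finset.sum_le_card_nsmul Finset.univ (fun i ↦ C i ^ 2) (C j ^ 2)
      fun i _ ↦ pow_le_pow_left₀ (hC i) (hmax i) 2
  calc Real.sqrt (∑ i, C i ^ 2) ≤ Real.sqrt (n * C j ^ 2) := Real.sqrt_le_sqrt hsum
    _ = Real.sqrt n * C j := by rw [Real.sqrt_mul (Nat.cast_nonneg n), Real.sqrt_sq (hC j)]

theorem exists_le_div_sqrt_of_mul_le {α : Type*} {p : α → Prop} {S φ : α → ℝ} {κ M : ℝ}
    (hκ : 0 < κ) (h : ∀ a, p a → M ≤ Real.sqrt (S a) → κ * S a ≤ φ a) (K : ℝ) :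
    ∃ R, ∀ a, p a → R ≤ Real.sqrt (S a) → K ≤ φ a / Real.sqrt (S a) := by
  refine ⟨max M (max 1 (K / κ)), fun a ha hR ↦ ?_⟩
  obtain ⟨hM, h1, hK⟩ : M ≤ Real.sqrt (S a) ∧ 1 ≤ Real.sqrt (S a) ∧ K / κ ≤ Real.sqrt (S a) := by
    simpa only [max_le_iff] using hR
  have hS : S a = Real.sqrt (S a) ^ 2 :=
    (Real.sq_sqrt (Real.sqrt_pos.1 (by linarith)).le).symm
  rw [le_div_iff₀ (by linarith)]
  nlinarith [h a ha hM, (div_le_iff₀ hκ).1 hK]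

theorem continuous_fj (n : ℕ) (x C : Fin n → ℝ) (j : Fin n) : Continuous (fj n x C j) := by
  unfold fj; fun_prop

theorem continuous_fmax {n : ℕ} [Nonempty (Fin n)] (x C : Fin n → ℝ) :
    Continuous (fmax n x C) := by
  have hsup : Continuous fun t ↦ ⨆ j, fj n x C j t := by
    convert Continuous.finset_sup'_apply Finset.univ_nonempty
      (fun i _ ↦ continuous_fj n x C i) using 2 with t
    exact (Finset.sup'_univ_eq_ciSup _).symm
  exact hsup.max continuous_const

theorem fmax_nonneg (n : ℕ) (x C : Fin n → ℝ) (t : ℝ) : 0 ≤ fmax n x C t :=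
  le_max_right _ _

theorem Fj_nonneg (n : ℕ) (x C : Fin n → ℝ) (j : Fin n) : 0 ≤ Fj n x C j := by
  unfold Fj
  split_ifs
  · exact integral_nonneg (fmax_nonneg n x C)
  · rfl

section Envelope

variable {n : ℕ} {x C : Fin n → ℝ} {j : Fin n} {t : ℝ}

theorem fmax_eq_fj_of_forall_le (hle : ∀ i, fj n x C i t ≤ fj n x C j t)
    (hnonneg : 0 ≤ fj n x C j t) : fmax n x C t = fj n x C j t := by
  have : Nonempty (Fin n) := ⟨j⟩
  have hsup : ⨆ i, fj n x C i t = fj n x C j t :=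
    le_antisymm (ciSup_le hle) (le_ciSup (Finite.bddAbove_range fun i ↦ fj n x C i t) j)
  rw [fmax, hsup, max_eq_left hnonneg]

theorem Ej_subset_closedBall : Ej n x C j ⊆ closedBall (x j) (Real.sqrt (C j)) := by
  intro t (ht : fj n x C j t = fmax n x C t)
  have hsq : (t - x j) ^ 2 ≤ C j := by
    have := ht ▸ fmax_nonneg n x C t
    unfold fj at this
    linarith
  rw [mem_closedBall, Real.dist_eq]
  exact Real.abs_le_sqrt hsq

theorem integrableOn_Ej [Nonempty (Fin n)] : IntegrableOn (fmax n x C) (Ej n x C j) :=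
  ((continuous_fmax x C).continuousOn.integrableOn_compact (isCompact_closedBall _ _)).mono_set
    Ej_subset_closedBall

theorem fj_ge_of_mem_closedBall {d : ℝ} (ht : t ∈ closedBall (x j) d) :
    C j - d ^ 2 ≤ fj n x C j t := by
  have : (t - x j) ^ 2 ≤ d ^ 2 := by
    rw [← sq_abs, ← Real.dist_eq]
    exact pow_le_pow_left₀ dist_nonneg ht 2
  unfold fj
  linarith

theorem closedBall_subset_Ej {d : ℝ} (hsep : ∀ i, i ≠ j → 2 * d ≤ dist (x i) (x j))
    (hmax : ∀ i, C i ≤ C j) (hd : d ^ 2 ≤ C j) : closedBall (x j) d ⊆ Ej n x C j := by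
  intro t ht
  have hclosest : ∀ i, (t - x j) ^ 2 ≤ (t - x i) ^ 2 := by
    intro i
    rcases eq_or_ne i j with rfl | hij
    · rfl
    · have := dist_triangle_left (x i) (x j) t
      rw [← sq_abs, ← sq_abs (t - x i), ← Real.dist_eq, ← Real.dist_eq]
      exact pow_le_pow_left₀ dist_nonneg (by linarith [hsep i hij, mem_closedBall.1 ht]) 2
  have hnonneg : 0 ≤ fj n x C j t := by linarith [fj_ge_of_mem_closedBall (C := C) ht]
  refine (fmax_eq_fj_of_forall_le (fun i ↦ ?_) hnonneg).symm
  unfold fj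
  linarith [hmax i, hclosest i]

theorem mul_le_Fj_of_forall_le {d : ℝ} (hd : 0 < d)
    (hsep : ∀ i, i ≠ j → 2 * d ≤ dist (x i) (x j)) (hmax : ∀ i, C i ≤ C j)
    (hC : 2 * d ^ 2 ≤ C j) : d * C j ≤ Fj n x C j := by
  have : Nonempty (Fin n) := ⟨j⟩
  have hball := closedBall_subset_Ej hsep hmax (by nlinarith)
  have hlow : ∀ t ∈ closedBall (x j) d, C j - d ^ 2 ≤ fmax n x C t := fun t ht ↦
    hball ht ▸ fj_ge_of_mem_closedBall ht
  calc d * C j ≤ (C j - d ^ 2) * volume.real (closedBall (x j) d) := by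
        rw [Real.volume_real_closedBall hd.le]
        nlinarith
    _ ≤ ∫ t in closedBall (x j) d, fmax n x C t :=
        setIntegral_ge_of_const_le_real measurableSet_closedBall measure_closedBall_lt_top.ne
          hlow ((continuous_fmax x C).continuousOn.integrableOn_compact (isCompact_closedBall _ _))
    _ ≤ ∫ t in Ej n x C j, fmax n x C t :=
        setIntegral_mono_set integrableOn_Ej (.of_forall (fmax_nonneg n x C))
          hball.eventuallyLE
    _ = Fj n x C j := by
        rw [Fj, if_pos (Set.Nonempty.mono hball (nonempty_closedBall.2 hd.le))]

end Envelope

theorem exists_mul_sq_le_sum_Fj_mul {n : ℕ} {x : Fin n → ℝ} (hx : Function.Injective x) :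
    ∃ d > 0, ∀ C : Fin n → ℝ, (∀ i, 0 ≤ C i) → ∀ j, (∀ i, C i ≤ C j) → 2 * d ^ 2 ≤ C j →
      d * C j ^ 2 ≤ ∑ i, Fj n x C i * C i := by
  obtain ⟨d, hd, hsep⟩ := hx.exists_pos_forall_le_dist
  refine ⟨d / 2, half_pos hd, fun C hC j hmax hCj ↦ ?_⟩
  have hFj := mul_le_Fj_of_forall_le (x := x) (half_pos hd)
    (fun i hij ↦ by linarith [hsep i j hij]) hmax hCj
  calc d / 2 * C j ^ 2 ≤ Fj n x C j * C j := by nlinarith [hC j]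
    _ ≤ ∑ i, Fj n x C i * C i :=
        Finset.single_le_sum (f := fun i ↦ Fj n x C i * C i)
          (fun i _ ↦ mul_nonneg (Fj_nonneg n x C i) (hC i)) (Finset.mem_univ j)

theorem exists_div_mul_sum_sq_le_sum_Fj_mul {n : ℕ} (hn : 1 ≤ n) {x : Fin n → ℝ}
    (hx : Function.Injective x) :
    ∃ d > 0, ∀ C : Fin n → ℝ, (∀ j, 0 ≤ C j) →
      2 * d ^ 2 * Real.sqrt n ≤ Real.sqrt (∑ j, C j ^ 2) →
      d / n * ∑ j, C j ^ 2 ≤ ∑ j, Fj n x C j * C j := by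
  obtain ⟨d, hd, hsum⟩ := exists_mul_sq_le_sum_Fj_mul hx
  refine ⟨d, hd, fun C hC hnorm ↦ ?_⟩
  have hsn : 0 < Real.sqrt n := Real.sqrt_pos.2 (by exact_mod_cast hn)
  obtain ⟨j, -, hmax⟩ := Finset.exists_max_image Finset.univ C ⟨⟨0, hn⟩, Finset.mem_univ _⟩
  have hmax' : ∀ i, C i ≤ C j := fun i ↦ hmax i (Finset.mem_univ i)
  have hnormj := sqrt_sum_sq_le_sqrt_card_mul hC hmax'
  calc d / n * ∑ j, C j ^ 2 = d / n * Real.sqrt (∑ j, C j ^ 2) ^ 2 := by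
        rw [Real.sq_sqrt (Finset.sum_nonneg fun i _ ↦ sq_nonneg (C i))]
    _ ≤ d / n * (Real.sqrt n * C j) ^ 2 := by gcongr
    _ = d * C j ^ 2 := by
        rw [mul_pow, Real.sq_sqrt (Nat.cast_nonneg n)]
        field_simp
    _ ≤ ∑ i, Fj n x C i * C i :=
        hsum C hC j hmax' (le_of_mul_le_mul_right (by linarith) hsn)

/-- `F` is coercive on the nonnegative orthant: there are `δ ∈ (0,1)`, `M > 0`
with `F(C)·C ≥ (δ/√n)‖C‖²` whenever `C ≥ 0` and `‖C‖ ≥ M√n`; in particular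
`F(C)·C/‖C‖ → ∞` as `‖C‖ → ∞` over the nonnegative orthant. -/
theorem stmt_15 (n : ℕ) (hn : 1 ≤ n) (x : Fin n → ℝ) (hx : StrictMono x) :
    (∃ δ ∈ Set.Ioo (0 : ℝ) 1, ∃ M : ℝ, 0 < M ∧
      ∀ C : Fin n → ℝ, (∀ j, 0 ≤ C j) →
        M * Real.sqrt n ≤ Real.sqrt (∑ j, C j ^ 2) →
        (δ / Real.sqrt n) * (∑ j, C j ^ 2) ≤ ∑ j, Fj n x C j * C j) ∧
    (∀ K : ℝ, ∃ R : ℝ, ∀ C : Fin n → ℝ, (∀ j, 0 ≤ C j) →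
      R ≤ Real.sqrt (∑ j, C j ^ 2) →
      K ≤ (∑ j, Fj n x C j * C j) / Real.sqrt (∑ j, C j ^ 2)) := by
  obtain ⟨d, hd, hcoercive⟩ := exists_div_mul_sum_sq_le_sum_Fj_mul hn hx.injective
  have hsn : 0 < Real.sqrt n := Real.sqrt_pos.2 (by exact_mod_cast hn)
  set δ := min (1 / 2) (d / Real.sqrt n)
  have hδ : 0 < δ := lt_min one_half_pos (div_pos hd hsn)
  have hδd : δ / Real.sqrt n ≤ d / n :=
    calc δ / Real.sqrt n ≤ d / Real.sqrt n / Real.sqrt n := by gcongr; exact min_le_right _ _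
      _ = d / n := by rw [div_div, Real.mul_self_sqrt (Nat.cast_nonneg n)]
  have coercive : ∀ C : Fin n → ℝ, (∀ j, 0 ≤ C j) →
      2 * d ^ 2 * Real.sqrt n ≤ Real.sqrt (∑ j, C j ^ 2) →
      (δ / Real.sqrt n) * (∑ j, C j ^ 2) ≤ ∑ j, Fj n x C j * C j := fun C hC hnorm ↦
    (mul_le_mul_of_nonneg_right hδd (Finset.sum_nonneg fun i _ ↦ sq_nonneg (C i))).trans
      (hcoercive C hC hnorm)
  exact ⟨⟨δ, ⟨hδ, (min_le_left _ _).trans_lt one_half_lt_one⟩, 2 * d ^ 2, by positivity,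
    coercive⟩, exists_le_div_sqrt_of_mul_le (div_pos hδ hsn) coercive⟩
end

section
/- For every subset I ⊆ {1, …, n}, the set 𝒞_I = {C ∈ ℝ^n : E_j^{(C)} = ∅ for all j ∈ I} is open in ℝ^n. -/
open MeasureTheory Set
open scoped Classical

lemma fj_dist (n : ℕ) (x C C' : Fin n → ℝ) (j : Fin n) (t : ℝ) :
    |fj n x C j t - fj n x C' j t| ≤ dist C C' := by
  have h : fj n x C j t - fj n x C' j t = C j - C' j := by unfold fj; ring
  rw [h, ← Real.dist_eq]
  exact dist_le_pi_dist C C' j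

lemma isup_le_isup (n : ℕ) (hn : 1 ≤ n) (x C C' : Fin n → ℝ) (t : ℝ) :
    (⨆ j : Fin n, fj n x C j t) ≤ (⨆ j : Fin n, fj n x C' j t) + dist C C' := by
  haveI : Nonempty (Fin n) := ⟨⟨0, hn⟩⟩
  refine ciSup_le fun j => ?_
  have h1 := abs_le.mp (fj_dist n x C C' j t)
  have h2 : fj n x C' j t ≤ ⨆ j, fj n x C' j t :=
    le_ciSup (f := fun j => fj n x C' j t) (Set.Finite.bddAbove (Set.finite_range _)) j
  linarith [h1.2]

lemma fmax_dist (n : ℕ) (hn : 1 ≤ n) (x C C' : Fin n → ℝ) (t : ℝ) :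
    |fmax n x C t - fmax n x C' t| ≤ dist C C' := by
  have h1 := isup_le_isup n hn x C C' t
  have h2 := isup_le_isup n hn x C' C t
  rw [dist_comm] at h2
  have h3 := abs_le.mp
    (abs_max_sub_max_le_abs (⨆ j, fj n x C j t) (⨆ j, fj n x C' j t) 0)
  have h4 : |(⨆ j, fj n x C j t) - ⨆ j, fj n x C' j t| ≤ dist C C' := by
    rw [abs_le]; constructor <;> linarith
  unfold fmax
  refine le_trans ?_ h4
  exact abs_max_sub_max_le_abs _ _ 0

lemma fj_le_fmax (n : ℕ) (x C : Fin n → ℝ) (j : Fin n) (t : ℝ) :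
    fj n x C j t ≤ fmax n x C t :=
  le_max_of_le_left
    (le_ciSup (f := fun j => fj n x C j t) (Set.Finite.bddAbove (Set.finite_range _)) j)

lemma fmax_continuous (n : ℕ) (hn : 1 ≤ n) (x C : Fin n → ℝ) :
    Continuous (fmax n x C) := by
  haveI : Nonempty (Fin n) := ⟨⟨0, hn⟩⟩
  have h : ∀ t, (⨆ j : Fin n, fj n x C j t)
      = Finset.univ.sup' Finset.univ_nonempty (fun j => fj n x C j t) := by
    intro t; rw [Finset.sup'_univ_eq_ciSup]
  have hsup : Continuous (fun t => ⨆ j : Fin n, fj n x C j t) := by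
    simp only [funext h]
    rw [continuous_iff_continuousAt]
    intro t
    exact ContinuousAt.finset_sup'_apply Finset.univ_nonempty
      (fun i _ => (by unfold fj; fun_prop : Continuous (fj n x C i)).continuousAt)
  exact hsup.max continuous_const

lemma Sj_open (n : ℕ) (hn : 1 ≤ n) (x : Fin n → ℝ) (j : Fin n) :
    IsOpen {C : Fin n → ℝ | Ej n x C j = ∅} := by
  rw [Metric.isOpen_iff]
  intro C₀ hC₀
  simp only [Set.mem_setOf_eq] at hC₀
  set R := Real.sqrt (|C₀ j| + 1) with hR
  have hRsq : R ^ 2 = |C₀ j| + 1 := Real.sq_sqrt (by positivity)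
  have hRnn : 0 ≤ R := Real.sqrt_nonneg _
  have hKcompact : IsCompact (Metric.closedBall (x j) R) := isCompact_closedBall _ _
  have hKne : (Metric.closedBall (x j) R).Nonempty :=
    ⟨x j, Metric.mem_closedBall_self hRnn⟩
  have hcont : ContinuousOn (fun t => fmax n x C₀ t - fj n x C₀ j t)
      (Metric.closedBall (x j) R) := by
    apply Continuous.continuousOn
    exact (fmax_continuous n hn x C₀).sub (by unfold fj; fun_prop)
  obtain ⟨t₀, ht₀K, ht₀min⟩ := hKcompact.exists_isMinOn hKne hcont
  have hε₀ : 0 < fmax n x C₀ t₀ - fj n x C₀ j t₀ := by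
    have hle := fj_le_fmax n x C₀ j t₀
    have hne : fj n x C₀ j t₀ ≠ fmax n x C₀ t₀ := by
      intro h
      have : t₀ ∈ Ej n x C₀ j := h
      rw [hC₀] at this
      exact Set.notMem_empty _ this
    have := lt_of_le_of_ne hle hne
    linarith
  set ε₀ := fmax n x C₀ t₀ - fj n x C₀ j t₀ with hε₀def
  refine ⟨min (ε₀ / 2) (1 / 2), by positivity, ?_⟩
  intro C hC
  simp only [Metric.mem_ball] at hC
  have hd1 : dist C C₀ < ε₀ / 2 := lt_of_lt_of_le hC (min_le_left _ _)
  have hd2 : dist C C₀ < 1 / 2 := lt_of_lt_of_le hC (min_le_right _ _)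
  simp only [Set.mem_setOf_eq]
  rw [Set.eq_empty_iff_forall_notMem]
  intro t ht
  have hteq : fj n x C j t = fmax n x C t := ht
  by_cases htK : t ∈ Metric.closedBall (x j) R
  · have h1 : ε₀ ≤ fmax n x C₀ t - fj n x C₀ j t := ht₀min htK
    have h2 := abs_le.mp (fmax_dist n hn x C C₀ t)
    have h3 := abs_le.mp (fj_dist n x C C₀ j t)
    linarith [h2.1, h2.2, h3.1, h3.2]
  · have hRt : R < |t - x j| := by
      rw [Metric.mem_closedBall, not_le, Real.dist_eq] at htK
      exact htK
    have hsq : R ^ 2 < (t - x j) ^ 2 := by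
      have := sq_abs (t - x j)
      nlinarith
    have hCj : |C j - C₀ j| < 1 / 2 := by
      rw [← Real.dist_eq]
      exact lt_of_le_of_lt (dist_le_pi_dist C C₀ j) hd2
    have habs := abs_le.mp (le_of_lt hCj)
    have hneg : fj n x C j t < 0 := by
      unfold fj
      have := le_abs_self (C₀ j)
      nlinarith
    have h0 : (0 : ℝ) ≤ fmax n x C t := le_max_right _ _
    linarith [hteq ▸ hneg]

/-- For every `I ⊆ {1, …, n}`, the set
`𝒞_I = {C : E_j^{(C)} = ∅ for all j ∈ I}` is open in `ℝ^n`. -/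
theorem stmt_16 (n : ℕ) (hn : 1 ≤ n) (x : Fin n → ℝ) (hx : StrictMono x) :
    ∀ I : Set (Fin n),
      IsOpen {C : Fin n → ℝ | ∀ j ∈ I, Ej n x C j = ∅} := by
  intro I
  have heq : {C : Fin n → ℝ | ∀ j ∈ I, Ej n x C j = ∅}
      = ⋂ j ∈ I, {C : Fin n → ℝ | Ej n x C j = ∅} := by
    ext C; simp [Set.mem_iInter]
  rw [heq]
  exact (I.toFinite).isOpen_biInter fun j _ => Sj_open n hn x j
end
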